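/- arXiv:1406.0465 — 2 statements merged into one kernel-verified Lean document; each statement's English description precedes it below -/
import Mathlib

section
/- Let u : ℝ → ℝ be a submultiplicative weight on ℝ, and suppose t ↦ u(t)·exp(−εt) is unbounded on [0,∞) for some ε > 0. Then there exists a sequence of positive integers k_n → ∞ such that liminf_{n→∞} u(k_n)^(1/k_n) ≥ exp(ε); in particular u fails the GRS-condition. -/
open Filter Real

theorem stmt3 (u : ℝ → ℝ) (ε : ℝ) (hε : 0 < ε)
    (hpos : ∀ t, 0 < u t)
    (heven : ∀ t, u (-t) = u t)
    (hsub : ∀ s t, u (s + t) ≤ u s * u t)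
    (hloc : ∀ R : ℝ, ∃ M : ℝ, ∀ t, |t| ≤ R → u t ≤ M)
    (hunbd : ¬ ∃ M : ℝ, ∀ t : ℝ, 0 ≤ t → u t * Real.exp (-ε * t) ≤ M) :
    (∃ k : ℕ → ℕ, (∀ n, 0 < k n) ∧ Filter.Tendsto k atTop atTop ∧
      Real.exp ε ≤ Filter.liminf (fun n : ℕ => (u (k n : ℝ)) ^ (((k n : ℕ) : ℝ)⁻¹)) atTop) ∧
    ¬ (∀ t : ℝ, Filter.Tendsto (fun ℓ : ℕ => (u ((ℓ : ℝ) * t)) ^ ((ℓ : ℝ)⁻¹)) atTop (nhds 1)) := by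
  push_neg at hunbd
  obtain ⟨M, hM⟩ := hloc 2
  have hMpos : 0 < M := lt_of_lt_of_le (hpos 0) (hM 0 (by norm_num))
  -- choose t n
  have hch : ∀ n : ℕ, ∃ t : ℝ, 0 ≤ t ∧
      M * Real.exp (2 * ε) * (n + 1) < u t * Real.exp (-ε * t) := fun n =>
    hunbd (M * Real.exp (2 * ε) * (n + 1))
  choose t ht0 htb using hch
  set k : ℕ → ℕ := fun n => ⌈t n⌉₊ + 1 with hk
  have hk0 : ∀ n, 0 < k n := fun n => Nat.succ_pos _
  have hkt : ∀ n, t n ≤ (k n : ℝ) := by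
    intro n
    simp only [hk, Nat.cast_add, Nat.cast_one]
    exact le_trans (Nat.le_ceil _) (by linarith)
  have hkt2 : ∀ n, (k n : ℝ) ≤ t n + 2 := by
    intro n
    simp only [hk, Nat.cast_add, Nat.cast_one]
    have := Nat.ceil_lt_add_one (ht0 n)
    linarith
  -- key lower bound
  have hkey : ∀ n : ℕ, (n + 1 : ℝ) * Real.exp (ε * (k n)) ≤ u (k n) := by
    intro n
    have h1 : u (t n) ≤ u (k n) * M := by
      have := hsub (k n) (t n - k n)
      have h2 : u (t n - k n) ≤ M := by
        rw [← heven, neg_sub]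
        apply hM
        rw [abs_of_nonneg (by linarith [hkt n, hkt2 n])]
        linarith [hkt n, hkt2 n]
      calc u (t n) = u ((k n : ℝ) + (t n - k n)) := by ring_nf
        _ ≤ u (k n) * u (t n - k n) := hsub _ _
        _ ≤ u (k n) * M := by
            exact mul_le_mul_of_nonneg_left h2 (le_of_lt (hpos _))
    have h3 : M * Real.exp (2 * ε) * (n + 1) * Real.exp (ε * t n) < u (t n) := by
      have hmul := mul_lt_mul_of_pos_right (htb n) (Real.exp_pos (ε * t n))
      have hc : u (t n) * Real.exp (-ε * t n) * Real.exp (ε * t n) = u (t n) := by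
        rw [mul_assoc, ← Real.exp_add, show -ε * t n + ε * t n = 0 by ring,
          Real.exp_zero, mul_one]
      rwa [hc] at hmul
    have h4 : Real.exp (ε * (k n)) ≤ Real.exp (2 * ε) * Real.exp (ε * t n) := by
      rw [← Real.exp_add]
      apply Real.exp_le_exp.2
      nlinarith [hkt2 n]
    have h5 : (n + 1 : ℝ) * Real.exp (ε * (k n)) ≤ (n+1) * (Real.exp (2*ε) * Real.exp (ε * t n)) :=
      mul_le_mul_of_nonneg_left h4 (by positivity)
    have h6 : u (t n) / M ≤ u (k n) := by
      rw [div_le_iff₀ hMpos]; exact h1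
    have h7 : (n + 1 : ℝ) * (Real.exp (2*ε) * Real.exp (ε * t n)) ≤ u (t n) / M := by
      rw [le_div_iff₀ hMpos]
      nlinarith [h3]
    linarith
  have hexp1 : ∀ n : ℕ, Real.exp (ε * k n) ≤ u (k n) := by
    intro n
    have := hkey n
    nlinarith [Real.exp_pos (ε * k n), (Nat.cast_nonneg n : (0:ℝ) ≤ n)]
  have hterm : ∀ n : ℕ, Real.exp ε ≤ (u (k n : ℝ)) ^ (((k n : ℕ) : ℝ)⁻¹) := by
    intro n
    have hkn : (0:ℝ) < (k n : ℝ) := by exact_mod_cast hk0 n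
    have : Real.exp (ε * k n) ^ (((k n : ℕ) : ℝ)⁻¹) ≤ (u (k n : ℝ)) ^ (((k n : ℕ) : ℝ)⁻¹) :=
      Real.rpow_le_rpow (le_of_lt (Real.exp_pos _)) (hexp1 n) (by positivity)
    calc Real.exp ε = Real.exp (ε * k n) ^ (((k n : ℕ) : ℝ)⁻¹) := by
          rw [← Real.exp_mul]
          congr 1
          field_simp
      _ ≤ _ := this
  have hktop : Tendsto k atTop atTop := by
    apply tendsto_atTop_atTop.2
    intro N
    obtain ⟨MN, hMN⟩ := hloc N
    refine ⟨⌈MN⌉₊, fun n hn => ?_⟩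
    by_contra h
    push_neg at h
    have hkN : (k n : ℝ) ≤ N := by
      have : (k n : ℝ) ≤ (N : ℝ) := by exact_mod_cast le_of_lt h
      exact this
    have hub : u (k n) ≤ MN := hMN _ (by rw [abs_of_nonneg (by positivity)]; exact hkN)
    have h1 : (n + 1 : ℝ) ≤ u (k n) := by
      have := hkey n
      nlinarith [Real.one_le_exp (by positivity : (0:ℝ) ≤ ε * k n)]
    have h2 : MN ≤ (n : ℝ) := le_trans (Nat.le_ceil MN) (by exact_mod_cast hn)
    linarith
  have hpow : ∀ m : ℕ, 1 ≤ m → u m ≤ u 1 ^ m := by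
    intro m hm
    induction m with
    | zero => omega
    | succ p ih =>
      rcases Nat.eq_zero_or_pos p with hp | hp
      · subst hp; simpa using le_refl (u 1)
      · have h1 : u ((p:ℝ) + 1) ≤ u p * u 1 := hsub p 1
        have h2 : u p ≤ u 1 ^ p := ih hp
        have : u ((p:ℝ) + 1) ≤ u 1 ^ p * u 1 :=
          le_trans h1 (mul_le_mul_of_nonneg_right h2 (le_of_lt (hpos 1)))
        calc u ((p+1 : ℕ) : ℝ) = u ((p:ℝ) + 1) := by push_cast; ring_nf
          _ ≤ u 1 ^ p * u 1 := this
          _ = u 1 ^ (p+1) := by ring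
  have hbdd : ∀ n : ℕ, (u (k n : ℝ)) ^ (((k n : ℕ) : ℝ)⁻¹) ≤ u 1 := by
    intro n
    have hkn : (0:ℝ) < (k n : ℝ) := by exact_mod_cast hk0 n
    have h1 : u (k n : ℝ) ≤ u 1 ^ (k n : ℕ) := hpow (k n) (hk0 n)
    have h2 : (u (k n : ℝ)) ^ (((k n : ℕ) : ℝ)⁻¹) ≤ (u 1 ^ (k n : ℕ) : ℝ) ^ (((k n : ℕ) : ℝ)⁻¹) :=
      Real.rpow_le_rpow (le_of_lt (hpos _)) h1 (by positivity)
    calc (u (k n : ℝ)) ^ (((k n : ℕ) : ℝ)⁻¹) ≤ (u 1 ^ (k n : ℕ) : ℝ) ^ (((k n : ℕ) : ℝ)⁻¹) := h2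
      _ = (u 1 ^ ((k n : ℕ) : ℝ)) ^ (((k n : ℕ) : ℝ)⁻¹) := by
          rw [Real.rpow_natCast]
      _ = u 1 ^ (((k n : ℕ) : ℝ) * ((k n : ℕ) : ℝ)⁻¹) := by
          rw [← Real.rpow_mul (le_of_lt (hpos 1))]
      _ = u 1 := by rw [mul_inv_cancel₀ (ne_of_gt hkn), Real.rpow_one]
  constructor
  · refine ⟨k, hk0, hktop, ?_⟩
    exact Filter.le_liminf_of_le (isCoboundedUnder_ge_of_le atTop fun n => hbdd n)
      (Filter.Eventually.of_forall hterm)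
  · intro hGRS
    have h1 := hGRS 1
    simp only [mul_one] at h1
    have h2 : Tendsto (fun n : ℕ => (u ((k n : ℕ) : ℝ)) ^ (((k n : ℕ) : ℝ)⁻¹)) atTop (nhds 1) :=
      h1.comp hktop
    have h3 : ∀ᶠ n : ℕ in atTop, (u ((k n : ℕ) : ℝ)) ^ (((k n : ℕ) : ℝ)⁻¹) < Real.exp ε :=
      (tendsto_order.1 h2).2 _ (Real.one_lt_exp_iff.2 hε)
    obtain ⟨n, hn⟩ := h3.exists
    exact absurd (hterm n) (not_le.2 hn)
end

section
/- Let v be a submultiplicative weight on ℝ^d. Then v satisfies the GRS-condition (lim_{ℓ→∞} v(ℓx)^{1/ℓ} = 1 for all x) if and only if for every ε > 0 there exists C > 0 such that v(x) ≤ C·exp(ε|x|) for all x ∈ ℝ^d. -/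
open Filter Real Topology

/-!
Pass to `w = log v`, which is subadditive, even and nonnegative; both conditions are
statements about the growth of `w`. If `w` grows sublinearly, then `w (ℓ • x) / ℓ → 0`,
which is the GRS-condition. Conversely, the GRS-condition along a vector `x` bounds
`w (ℓ • x)` by `A + ε ℓ` on the integers, and subadditivity together with local
boundedness extends this to the whole line `t • x`. Writing a vector in coordinates,
subadditivity adds up these bounds along the `d` coordinate axes.
-/

def HasSublinearGrowth {α : Type*} [Norm α] (f : α → ℝ) : Prop :=
  ∀ ε > 0, ∃ c, ∀ x, f x ≤ c + ε * ‖x‖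

lemma one_le_of_submultiplicative {G : Type*} [AddGroup G] {v : G → ℝ} (hpos : ∀ x, 0 < v x)
    (heven : ∀ x, v (-x) = v x) (hsub : ∀ x y, v (x + y) ≤ v x * v y) (x : G) : 1 ≤ v x := by
  have h0 : v 0 ≤ v 0 * v 0 := by simpa using hsub 0 0
  have hx : v 0 ≤ v x * v x := by simpa [heven] using hsub x (-x)
  have h01 : 1 ≤ v 0 := by nlinarith [hpos 0]
  nlinarith [hpos x]

lemma le_add_sum_of_subadditive {M ι : Type*} [AddCommMonoid M] {w : M → ℝ}
    (hsub : ∀ x y, w (x + y) ≤ w x + w y) (a : M) (s : Finset ι) (f : ι → M) :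
    w (a + ∑ i ∈ s, f i) ≤ w a + ∑ i ∈ s, w (f i) := by
  classical
  induction s using Finset.induction_on with
  | empty => simp
  | insert i s hi ih =>
    rw [Finset.sum_insert hi, Finset.sum_insert hi, add_left_comm]
    linarith [hsub (f i) (a + ∑ j ∈ s, f j)]

lemma tendsto_rpow_inv_natCast_iff {u : ℕ → ℝ} (hu : ∀ n, 0 < u n) :
    Tendsto (fun n : ℕ => u n ^ (n : ℝ)⁻¹) atTop (𝓝 1) ↔
      Tendsto (fun n : ℕ => log (u n) / n) atTop (𝓝 0) := by
  have heq : (fun n : ℕ => u n ^ (n : ℝ)⁻¹) = fun n => exp (log (u n) / n) := by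
    ext n
    rw [rpow_def_of_pos (hu n), div_eq_mul_inv]
  rw [heq]
  constructor
  · intro h
    simpa [Function.comp_def] using (continuousAt_log one_ne_zero).tendsto.comp h
  · intro h
    simpa [Function.comp_def] using (continuous_exp.tendsto 0).comp h

lemma exists_le_mul_exp_iff_hasSublinearGrowth_log {α : Type*} [Norm α] {v : α → ℝ}
    (hpos : ∀ x, 0 < v x) :
    (∀ ε : ℝ, 0 < ε → ∃ C : ℝ, 0 < C ∧ ∀ x, v x ≤ C * exp (ε * ‖x‖)) ↔
      HasSublinearGrowth fun x => log (v x) := by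
  refine forall₂_congr fun ε _ => ⟨fun ⟨C, hC, hv⟩ => ⟨log C, fun x => ?_⟩,
    fun ⟨c, hw⟩ => ⟨exp c, exp_pos c, fun x => ?_⟩⟩
  · rw [← log_exp (ε * ‖x‖), ← log_mul hC.ne' (exp_pos _).ne']
    exact log_le_log (hpos x) (hv x)
  · rw [← exp_add, ← exp_log (hpos x)]
    exact exp_le_exp.2 (hw x)

lemma exists_le_add_mul_of_tendsto_div {u : ℕ → ℝ}
    (hu : Tendsto (fun n : ℕ => u n / n) atTop (𝓝 0)) {ε : ℝ} (hε : 0 < ε) :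
    ∃ A, ∀ n : ℕ, u n ≤ A + ε * n := by
  have hev : ∀ᶠ n : ℕ in atTop, u n - ε * n ≤ 0 := by
    filter_upwards [hu.eventually (gt_mem_nhds hε), eventually_gt_atTop 0] with n hn hn0
    rw [div_lt_iff₀ (by exact_mod_cast hn0)] at hn
    linarith
  obtain ⟨A, hA⟩ := (isBoundedUnder_of_eventually_le hev).bddAbove_range
  exact ⟨A, fun n => by linarith [hA ⟨n, rfl⟩]⟩

lemma hasSublinearGrowth_smul_of_tendsto {E : Type*} [AddCommGroup E] [Module ℝ E]
    {w : E → ℝ} (hsub : ∀ x y, w (x + y) ≤ w x + w y) (heven : ∀ x, w (-x) = w x) {x : E}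
    (hbdd : ∃ M, ∀ s ∈ Set.Icc (0 : ℝ) 1, w (s • x) ≤ M)
    (hgrs : Tendsto (fun n : ℕ => w ((n : ℝ) • x) / n) atTop (𝓝 0)) :
    HasSublinearGrowth fun t : ℝ => w (t • x) := by
  intro ε hε
  obtain ⟨M, hM⟩ := hbdd
  obtain ⟨A, hA⟩ := exists_le_add_mul_of_tendsto_div hgrs hε
  have hnonneg : ∀ t : ℝ, 0 ≤ t → w (t • x) ≤ A + M + ε * t := by
    intro t ht
    have hfloor := Nat.floor_le ht
    have hfract : t - ⌊t⌋₊ ∈ Set.Icc (0 : ℝ) 1 :=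
      ⟨sub_nonneg.2 hfloor, by linarith [Nat.lt_floor_add_one t]⟩
    calc w (t • x) = w ((t - ⌊t⌋₊) • x + (⌊t⌋₊ : ℝ) • x) := by rw [← add_smul, sub_add_cancel]
      _ ≤ M + (A + ε * ⌊t⌋₊) := (hsub _ _).trans (add_le_add (hM _ hfract) (hA _))
      _ ≤ A + M + ε * t := by nlinarith
  refine ⟨A + M, fun t => ?_⟩
  rcases le_total 0 t with ht | ht
  · simpa [abs_of_nonneg ht] using hnonneg t ht
  · simpa [abs_of_nonpos ht, heven] using hnonneg (-t) (neg_nonneg.2 ht)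

lemma hasSublinearGrowth_of_basisFun {ι : Type*} [Fintype ι] {w : EuclideanSpace ℝ ι → ℝ}
    (hsub : ∀ x y, w (x + y) ≤ w x + w y)
    (hray : ∀ i, HasSublinearGrowth fun t : ℝ => w (t • EuclideanSpace.basisFun ι ℝ i)) :
    HasSublinearGrowth w := by
  intro ε hε
  set n := Fintype.card ι
  choose c hc using fun i => hray i (ε / (n + 1)) (by positivity)
  refine ⟨w 0 + ∑ i, c i, fun x => ?_⟩
  have hsum : ∑ i, |x i| ≤ (n + 1) * ‖x‖ := by
    calc ∑ i, |x i| ≤ ∑ _i : ι, ‖x‖ := Finset.sum_le_sum fun i _ => PiLp.norm_apply_le x i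
      _ = n * ‖x‖ := by simp [n]
      _ ≤ (n + 1) * ‖x‖ := by nlinarith [norm_nonneg x]
  calc w x = w (0 + ∑ i, x i • EuclideanSpace.basisFun ι ℝ i) := by
        rw [zero_add]
        exact congrArg w ((EuclideanSpace.basisFun ι ℝ).sum_repr x).symm
    _ ≤ w 0 + ∑ i, w (x i • EuclideanSpace.basisFun ι ℝ i) := le_add_sum_of_subadditive hsub _ _ _
    _ ≤ w 0 + ∑ i, (c i + ε / (n + 1) * |x i|) := by
        gcongr with i
        simpa using hc i (x i)
    _ = w 0 + ∑ i, c i + ε / (n + 1) * ∑ i, |x i| := by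
        rw [Finset.sum_add_distrib, Finset.mul_sum]
        ring
    _ ≤ w 0 + ∑ i, c i + ε / (n + 1) * ((n + 1) * ‖x‖) := by gcongr
    _ = w 0 + ∑ i, c i + ε * ‖x‖ := by field_simp

lemma tendsto_div_of_hasSublinearGrowth {E : Type*} [SeminormedAddCommGroup E]
    [NormedSpace ℝ E] {w : E → ℝ} (hw : HasSublinearGrowth w) (hnonneg : ∀ x, 0 ≤ w x) (x : E) :
    Tendsto (fun n : ℕ => w ((n : ℝ) • x) / n) atTop (𝓝 0) := by
  refine tendsto_order.2 ⟨fun a ha => Eventually.of_forall fun n =>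
    ha.trans_le (div_nonneg (hnonneg _) n.cast_nonneg), fun b hb => ?_⟩
  set ε := b / 2 / (‖x‖ + 1)
  obtain ⟨c, hc⟩ := hw ε (by positivity)
  have hεx : ε * ‖x‖ < b / 2 := by
    rw [div_mul_eq_mul_div, div_lt_iff₀ (by positivity)]
    nlinarith [norm_nonneg x]
  filter_upwards [(tendsto_const_div_atTop_nhds_zero_nat c).eventually (gt_mem_nhds (half_pos hb)),
    eventually_gt_atTop 0] with n hcn hn
  have hn' : (0 : ℝ) < n := by exact_mod_cast hn
  calc w ((n : ℝ) • x) / n ≤ (c + ε * (n * ‖x‖)) / n := by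
        gcongr
        simpa [norm_smul] using hc ((n : ℝ) • x)
    _ = c / n + ε * ‖x‖ := by field_simp
    _ < b := by linarith

theorem stmt4 (d : ℕ) (v : EuclideanSpace ℝ (Fin d) → ℝ)
    (hpos : ∀ x, 0 < v x)
    (heven : ∀ x, v (-x) = v x)
    (hsub : ∀ x y, v (x + y) ≤ v x * v y)
    (hloc : ∀ R : ℝ, ∃ M : ℝ, ∀ x, ‖x‖ ≤ R → v x ≤ M) :
    (∀ x, Filter.Tendsto (fun ℓ : ℕ => (v ((ℓ : ℝ) • x)) ^ ((ℓ : ℝ)⁻¹)) atTop (nhds 1)) ↔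
    (∀ ε : ℝ, 0 < ε → ∃ C : ℝ, 0 < C ∧ ∀ x, v x ≤ C * Real.exp (ε * ‖x‖)) := by
  have hlog_sub : ∀ x y, log (v (x + y)) ≤ log (v x) + log (v y) := fun x y => by
    rw [← log_mul (hpos x).ne' (hpos y).ne']
    exact log_le_log (hpos _) (hsub x y)
  have hlog_bdd : ∀ x, ∃ M, ∀ s ∈ Set.Icc (0 : ℝ) 1, log (v (s • x)) ≤ M := fun x => by
    obtain ⟨M, hM⟩ := hloc ‖x‖
    refine ⟨log M, fun s hs => log_le_log (hpos _) (hM _ ?_)⟩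
    rw [norm_smul, norm_of_nonneg hs.1]
    exact mul_le_of_le_one_left (norm_nonneg x) hs.2
  have hlog_even : ∀ x, log (v (-x)) = log (v x) := fun x => by rw [heven]
  rw [exists_le_mul_exp_iff_hasSublinearGrowth_log hpos]
  simp only [tendsto_rpow_inv_natCast_iff fun _ => hpos _]
  constructor
  · intro hgrs
    refine hasSublinearGrowth_of_basisFun hlog_sub fun i => ?_
    exact hasSublinearGrowth_smul_of_tendsto (w := fun x => log (v x)) hlog_sub hlog_even
      (hlog_bdd _) (hgrs _)
  · intro hw
    refine tendsto_div_of_hasSublinearGrowth hw fun x => ?_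
    exact log_nonneg (one_le_of_submultiplicative hpos heven hsub x)
end
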